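/- arXiv:2002.09130 — 3 statements merged into one kernel-verified Lean document; each statement's English description precedes it below -/
import Mathlib

section
/- Let r ≥ 1 be an integer. For any nonnegative reals x_1, ..., x_r satisfying x_1 + x_2 + ... + x_{r-1} + 2x_r ≥ 1/2, with x_0 := 0, one has 4x_1² + Σ_{i=2}^{r} (2x_i - x_{i-1})² ≥ 1/(4r). -/
/-!
Put `y i = 2 x i - x (i - 1)`. The sum of the `y i` telescopes to the left-hand side of the
linear constraint, so it is at least `1/2`, and the quadratic form is `∑ y i ^ 2`
(because `x 0 = 0`). Cauchy–Schwarz gives `(1/2)^2 ≤ (∑ y i)^2 ≤ r ∑ y i ^ 2`.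
-/

open Finset

theorem sum_Icc_two_mul_sub_pred (x : ℕ → ℝ) (r : ℕ) :
    ∑ i ∈ Icc 1 r, (2 * x i - x (i - 1)) = ∑ i ∈ Icc 1 r, x i + x r - x 0 := by
  induction r with
  | zero => simp
  | succ n ih =>
    rw [sum_Icc_succ_top (by omega), sum_Icc_succ_top (by omega), ih, Nat.add_sub_cancel]
    ring

theorem sum_Icc_two_mul_sub_pred_of_one_le (x : ℕ → ℝ) {r : ℕ} (hr : 1 ≤ r) :
    ∑ i ∈ Icc 1 r, (2 * x i - x (i - 1)) = ∑ i ∈ Icc 1 (r - 1), x i + 2 * x r - x 0 := by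
  obtain ⟨n, rfl⟩ : ∃ n, r = n + 1 := ⟨r - 1, by omega⟩
  rw [sum_Icc_two_mul_sub_pred, sum_Icc_succ_top (by omega), Nat.add_sub_cancel]
  ring

theorem sum_Icc_one_eq_add_sum_Icc_two (f : ℕ → ℝ) {r : ℕ} (hr : 1 ≤ r) :
    ∑ i ∈ Icc 1 r, f i = f 1 + ∑ i ∈ Icc 2 r, f i := by
  rw [← insert_Icc_add_one_left_eq_Icc hr, sum_insert (by simp)]
  rfl

theorem stmt4_general (r : ℕ) (hr : 1 ≤ r) (x : ℕ → ℝ) (hx0 : x 0 = 0)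
    (hsum : (∑ i ∈ Finset.Icc 1 (r - 1), x i) + 2 * x r ≥ 1/2) :
    4 * (x 1)^2 + ∑ i ∈ Finset.Icc 2 r, (2 * x i - x (i - 1))^2 ≥ 1 / (4 * r) := by
  have hquad : 4 * (x 1)^2 + ∑ i ∈ Icc 2 r, (2 * x i - x (i - 1))^2
      = ∑ i ∈ Icc 1 r, (2 * x i - x (i - 1))^2 := by
    rw [sum_Icc_one_eq_add_sum_Icc_two _ hr, Nat.sub_self, hx0]
    ring
  have hlin : 1/2 ≤ ∑ i ∈ Icc 1 r, (2 * x i - x (i - 1)) := by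
    rw [sum_Icc_two_mul_sub_pred_of_one_le x hr, hx0, sub_zero]
    exact hsum
  have hcs := sq_sum_le_card_mul_sum_sq (s := Icc 1 r) (f := fun i ↦ 2 * x i - x (i - 1))
  rw [Nat.card_Icc, Nat.add_sub_cancel] at hcs
  have hr' : (0 : ℝ) < r := by exact_mod_cast hr
  rw [hquad, ge_iff_le, div_le_iff₀ (by positivity)]
  nlinarith [pow_le_pow_left₀ (by norm_num) hlin 2]

theorem stmt4 (r : ℕ) (hr : 1 ≤ r) (x : ℕ → ℝ) (hx0 : x 0 = 0)
    (hnn : ∀ i ∈ Finset.Icc 1 r, 0 ≤ x i)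
    (hsum : (∑ i ∈ Finset.Icc 1 (r - 1), x i) + 2 * x r ≥ 1/2) :
    4 * (x 1)^2 + ∑ i ∈ Finset.Icc 2 r, (2 * x i - x (i - 1))^2 ≥ 1 / (4 * r) :=
  stmt4_general r hr x hx0 hsum
end

section
/- With the same setup, the mixed second partial derivatives of p satisfy ∂²p/∂x_i∂x_j ∈ {0, 2α(1+δ)} for i ≠ j (nonzero only when j = i±1 and the corresponding h-argument lies in the quadratic regime). Consequently, for q = 1 - e^{-p}, the second partials satisfy ∂²q/∂x_i∂x_j = (∂²p/∂x_i∂x_j - (∂p/∂x_i)(∂p/∂x_j)) e^{-p} ≤ (2α(1+δ) - (1 - 4α(1+δ))²) e^{-p} ≤ 0, provided 0 < α ≤ 1/16 and 0 < δ ≤ 1. -/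
/-- The piecewise penalty function `h` from the poly-round lower bound construction. -/
noncomputable def hPiece (α ε : ℝ) (x : ℝ) : ℝ :=
  if x ≤ ε then 0 else if x ≤ 2 + ε then α * (x - ε)^2 else 4 * α * (x - 1 - ε)

/-- The function `p(x₁,…,x_r) = Σ xᵢ - Σ h((1+δ)x_{i+1} - x_i)` (with `x 0 = 0`). -/
noncomputable def pFun (α δ ε : ℝ) (r : ℕ) (x : ℕ → ℝ) : ℝ :=
  (∑ i ∈ Finset.Icc 1 r, x i)
    - ∑ i ∈ Finset.range r, hPiece α ε ((1 + δ) * x (i + 1) - x i)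

/-!
`h` is `C¹` with `h' = 2α · clamp (t - ε) 0 2`, a piecewise linear function with slopes `0` and
`2α`. Hence `∂ᵢp` depends on a neighbour `x_{i±1}` only through one `h'`-term, and as a function
of that neighbour it has one-sided derivatives in `{0, 2α(1+δ)}` everywhere, kinks included. At a
kink `deriv` is either the junk value `0` or equal to the one-sided derivative, which gives the
values of the mixed partials. For `q`, `∂ᵢq = ∂ᵢp · e^{-p}` has right derivative
`(∂ⱼ∂ᵢp - ∂ᵢp ∂ⱼp) e^{-p} ≤ (2α(1+δ) - (1 - 4α(1+δ))²) e^{-p} ≤ 0` in `xⱼ`, because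
`∂ₖp ≥ 1 - 4α(1+δ) ≥ 0`; a continuous function with nonpositive right derivative is antitone.
-/

open Set Function

lemma hasDerivWithinAt_Iic_max_sub_zero (a t : ℝ) :
    HasDerivWithinAt (fun s => max (s - a) 0) (if a < t then 1 else 0) (Iic t) t := by
  split_ifs with h
  · refine ((hasDerivAt_id t).sub_const a).hasDerivWithinAt.congr_of_eventuallyEq ?_ ?_
    · filter_upwards [nhdsWithin_le_nhds (Ioi_mem_nhds h)] with s hs
      exact max_eq_left (sub_nonneg.2 (le_of_lt hs))
    · exact max_eq_left (sub_nonneg.2 h.le)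
  · refine (hasDerivWithinAt_const t _ 0).congr (fun s hs => ?_) ?_
    · exact max_eq_right (by linarith [mem_Iic.1 hs])
    · exact max_eq_right (by linarith)

lemma hasDerivWithinAt_Ici_max_sub_zero (a t : ℝ) :
    HasDerivWithinAt (fun s => max (s - a) 0) (if a ≤ t then 1 else 0) (Ici t) t := by
  split_ifs with h
  · refine ((hasDerivAt_id t).sub_const a).hasDerivWithinAt.congr (fun s hs => ?_) ?_
    · exact max_eq_left (by linarith [mem_Ici.1 hs])
    · exact max_eq_left (by linarith)
  · refine (hasDerivWithinAt_const t _ 0).congr_of_eventuallyEq ?_ ?_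
    · filter_upwards [nhdsWithin_le_nhds (Iio_mem_nhds (not_le.1 h))] with s hs
      exact max_eq_right (by linarith [mem_Iio.1 hs])
    · exact max_eq_right (by linarith)

lemma hasDerivAt_max_sub_zero_sq (a t : ℝ) :
    HasDerivAt (fun s => max (s - a) 0 ^ 2) (2 * max (t - a) 0) t := by
  rw [← hasDerivWithinAt_univ, ← Iic_union_Ici (a := t)]
  refine HasDerivWithinAt.union ?_ ?_
  · refine ((hasDerivWithinAt_Iic_max_sub_zero a t).fun_pow 2).congr_deriv ?_
    split_ifs with h
    · ring
    · simp [max_eq_right (by linarith : t - a ≤ 0)]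
  · refine ((hasDerivWithinAt_Ici_max_sub_zero a t).fun_pow 2).congr_deriv ?_
    split_ifs with h
    · ring
    · simp [max_eq_right (by linarith : t - a ≤ 0)]

noncomputable def hPieceDeriv (α ε t : ℝ) : ℝ :=
  2 * α * (max (t - ε) 0 - max (t - (2 + ε)) 0)

lemma hPiece_eq (α ε t : ℝ) :
    hPiece α ε t = α * max (t - ε) 0 ^ 2 - α * max (t - (2 + ε)) 0 ^ 2 := by
  unfold hPiece
  split_ifs with h₁ h₂
  · rw [max_eq_right (by linarith), max_eq_right (by linarith)]; ring
  · rw [max_eq_left (by linarith), max_eq_right (by linarith)]; ring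
  · rw [max_eq_left (by linarith), max_eq_left (by linarith)]; ring

lemma hasDerivAt_hPiece (α ε t : ℝ) : HasDerivAt (hPiece α ε) (hPieceDeriv α ε t) t := by
  rw [funext (hPiece_eq α ε)]
  exact (((hasDerivAt_max_sub_zero_sq ε t).const_mul α).sub
    ((hasDerivAt_max_sub_zero_sq (2 + ε) t).const_mul α)).congr_deriv
    (by unfold hPieceDeriv; ring)

lemma continuous_hPieceDeriv (α ε : ℝ) : Continuous (hPieceDeriv α ε) := by
  unfold hPieceDeriv; fun_prop

lemma hPieceDeriv_nonneg {α : ℝ} (hα : 0 ≤ α) (ε t : ℝ) : 0 ≤ hPieceDeriv α ε t :=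
  mul_nonneg (by positivity) (sub_nonneg.2 (max_le_max (by linarith) le_rfl))

lemma hPieceDeriv_le {α : ℝ} (hα : 0 ≤ α) (ε t : ℝ) : hPieceDeriv α ε t ≤ 4 * α := by
  have : max (t - ε) 0 - max (t - (2 + ε)) 0 ≤ 2 := by
    rw [sub_le_iff_le_add]
    exact max_le (by linarith [le_max_left (t - (2 + ε)) 0])
      (by linarith [le_max_right (t - (2 + ε)) 0])
  unfold hPieceDeriv; nlinarith

lemma exists_hasDerivWithinAt_Iic_hPieceDeriv (α ε t : ℝ) :
    ∃ m ∈ ({0, 2 * α} : Set ℝ), HasDerivWithinAt (hPieceDeriv α ε) m (Iic t) t := by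
  refine ⟨_, ?_, ((hasDerivWithinAt_Iic_max_sub_zero ε t).sub
    (hasDerivWithinAt_Iic_max_sub_zero (2 + ε) t)).const_mul (2 * α)⟩
  split_ifs <;> first | linarith | simp

lemma exists_hasDerivWithinAt_Ici_hPieceDeriv (α ε t : ℝ) :
    ∃ m ∈ ({0, 2 * α} : Set ℝ), HasDerivWithinAt (hPieceDeriv α ε) m (Ici t) t := by
  refine ⟨_, ?_, ((hasDerivWithinAt_Ici_max_sub_zero ε t).sub
    (hasDerivWithinAt_Ici_max_sub_zero (2 + ε) t)).const_mul (2 * α)⟩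
  split_ifs <;> first | linarith | simp

lemma hasDerivAt_update_apply {ι 𝕜 : Type*} [DecidableEq ι] [NontriviallyNormedField 𝕜]
    (y : ι → 𝕜) (i k : ι) (t : 𝕜) :
    HasDerivAt (fun s => update y i s k) ((Pi.single i 1 : ι → 𝕜) k) t := by
  by_cases h : k = i
  · subst h; simpa using hasDerivAt_id' t
  · simpa [update_of_ne h, Pi.single_apply, h] using hasDerivAt_const t (y k)

lemma update_update_apply_self {ι β : Type*} [DecidableEq ι] {i j : ι} (hij : i ≠ j)
    (x : ι → β) (v : β) : update (update x j v) i (x i) = update x j v := by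
  rw [← update_of_ne hij v x, update_eq_self]

noncomputable def pPartial (α δ ε : ℝ) (r : ℕ) (y : ℕ → ℝ) (i : ℕ) : ℝ :=
  1 - (1 + δ) * hPieceDeriv α ε ((1 + δ) * y i - y (i - 1))
    + if i < r then hPieceDeriv α ε ((1 + δ) * y (i + 1) - y i) else 0

lemma hasDerivAt_pFun_update (α δ ε : ℝ) {r i : ℕ} (hi : i ∈ Finset.Icc 1 r)
    (y : ℕ → ℝ) (t : ℝ) :
    HasDerivAt (fun s => pFun α δ ε r (update y i s)) (pPartial α δ ε r (update y i t) i) t := by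
  have hsum := HasDerivAt.fun_sum (u := Finset.Icc 1 r) fun k _ =>
    hasDerivAt_update_apply y i k t
  have hpen := HasDerivAt.fun_sum (u := Finset.range r) fun k _ =>
    (hasDerivAt_hPiece α ε _).comp t (((hasDerivAt_update_apply y i (k + 1) t).const_mul
      (1 + δ)).fun_sub (hasDerivAt_update_apply y i k t))
  refine (hsum.fun_sub hpen).congr_deriv ?_
  obtain ⟨hi1, hir⟩ := Finset.mem_Icc.1 hi
  set z : ℕ → ℝ := fun k => (1 + δ) * update y i t (k + 1) - update y i t k
  have hone : ∑ k ∈ Finset.Icc 1 r, (Pi.single i 1 : ℕ → ℝ) k = 1 := by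
    rw [Finset.sum_pi_single', if_pos hi]
  have hprev : ∑ k ∈ Finset.range r,
      hPieceDeriv α ε (z k) * ((1 + δ) * (Pi.single i 1 : ℕ → ℝ) (k + 1))
      = (1 + δ) * hPieceDeriv α ε (z (i - 1)) := by
    rw [Finset.sum_eq_single_of_mem (i - 1) (Finset.mem_range.2 (by omega))]
    · simp [Nat.sub_add_cancel hi1, mul_comm]
    · intro k _ hk; simp [Pi.single_apply]; omega
  have hnext : ∑ k ∈ Finset.range r, hPieceDeriv α ε (z k) * (Pi.single i 1 : ℕ → ℝ) k
      = if i < r then hPieceDeriv α ε (z i) else 0 := by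
    simp [Pi.single_apply]
  simp only [mul_sub, Finset.sum_sub_distrib]
  rw [hone, hprev, hnext]
  simp only [pPartial, z, Nat.sub_add_cancel hi1]
  ring

lemma hasDerivAt_one_sub_exp_neg_pFun_update (α δ ε : ℝ) {r i : ℕ}
    (hi : i ∈ Finset.Icc 1 r) (y : ℕ → ℝ) (t : ℝ) :
    HasDerivAt (fun s => 1 - Real.exp (-pFun α δ ε r (update y i s)))
      (pPartial α δ ε r (update y i t) i * Real.exp (-pFun α δ ε r (update y i t))) t :=
  ((hasDerivAt_pFun_update α δ ε hi y t).fun_neg.exp.const_sub 1).congr_deriv (by ring)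

lemma one_sub_le_pPartial {α δ : ℝ} (hα : 0 ≤ α) (hδ : 0 ≤ 1 + δ) (ε : ℝ) (r : ℕ)
    (y : ℕ → ℝ) (i : ℕ) : 1 - 4 * α * (1 + δ) ≤ pPartial α δ ε r y i := by
  have hprev := mul_le_mul_of_nonneg_left (hPieceDeriv_le hα ε ((1 + δ) * y i - y (i - 1))) hδ
  have hnext : 0 ≤ if i < r then hPieceDeriv α ε ((1 + δ) * y (i + 1) - y i) else 0 := by
    split_ifs
    · exact hPieceDeriv_nonneg hα _ _
    · exact le_rfl
  unfold pPartial; linarith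

lemma continuous_pPartial_update (α δ ε : ℝ) (r : ℕ) (x : ℕ → ℝ) (i j : ℕ) :
    Continuous fun v => pPartial α δ ε r (update x j v) i := by
  have hcoord : ∀ k, Continuous fun v => update x j v k := fun k => by fun_prop
  have := continuous_hPieceDeriv α ε
  unfold pPartial
  split_ifs <;> fun_prop

lemma exists_hasDerivWithinAt_Ici_pPartial_update (α δ ε : ℝ) (hδ : 0 ≤ 1 + δ)
    {r i j : ℕ} (hij : i ≠ j) (hjr : j ≤ r) (x : ℕ → ℝ) (v : ℝ) :
    ∃ m ∈ ({0, 2 * α * (1 + δ)} : Set ℝ),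
      HasDerivWithinAt (fun w => pPartial α δ ε r (update x j w) i) m (Ici v) v := by
  rcases (by omega : j = i + 1 ∨ i = j + 1 ∨ (j ≠ i + 1 ∧ i ≠ j + 1))
    with rfl | rfl | ⟨hnext, hprev⟩
  · obtain ⟨m, hm, hg⟩ := exists_hasDerivWithinAt_Ici_hPieceDeriv α ε ((1 + δ) * v - x i)
    have haff : HasDerivWithinAt (fun w => (1 + δ) * w - x i) (1 + δ) (Ici v) v := by
      simpa using (((hasDerivAt_id' v).const_mul (1 + δ)).sub_const (x i)).hasDerivWithinAt
    have hmaps : MapsTo (fun w => (1 + δ) * w - x i) (Ici v) (Ici ((1 + δ) * v - x i)) :=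
      fun w hw => by simp only [mem_Ici] at hw ⊢; nlinarith
    have hfun : (fun w => pPartial α δ ε r (update x (i + 1) w) i) = fun w =>
        (1 - (1 + δ) * hPieceDeriv α ε ((1 + δ) * x i - x (i - 1)))
          + hPieceDeriv α ε ((1 + δ) * w - x i) := by
      funext w
      simp [pPartial, show i < r by omega]
    rw [hfun]
    refine ⟨m * (1 + δ), ?_, (hg.comp v haff hmaps).const_add _⟩
    rcases hm with rfl | rfl <;> simp [mul_assoc]
  · -- the argument of `h'` decreases in `xⱼ`, so the left derivative of `h'` enters
    obtain ⟨m, hm, hg⟩ :=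
      exists_hasDerivWithinAt_Iic_hPieceDeriv α ε ((1 + δ) * x (j + 1) - v)
    have haff : HasDerivWithinAt (fun w => (1 + δ) * x (j + 1) - w) (-1) (Ici v) v := by
      simpa using ((hasDerivAt_id' v).const_sub ((1 + δ) * x (j + 1))).hasDerivWithinAt
    have hmaps :
        MapsTo (fun w => (1 + δ) * x (j + 1) - w) (Ici v) (Iic ((1 + δ) * x (j + 1) - v)) :=
      fun w hw => by simp only [mem_Ici, mem_Iic] at hw ⊢; linarith
    have hfun : (fun w => pPartial α δ ε r (update x j w) (j + 1)) = fun w =>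
        1 - (1 + δ) * hPieceDeriv α ε ((1 + δ) * x (j + 1) - w)
          + if j + 1 < r then hPieceDeriv α ε ((1 + δ) * x (j + 1 + 1) - x (j + 1)) else 0 := by
      funext w
      simp [pPartial, update_of_ne (by omega : j + 1 + 1 ≠ j)]
    rw [hfun]
    refine ⟨(1 + δ) * m, ?_, (((hg.comp v haff hmaps).const_mul (1 + δ)).const_sub 1).add_const _
      |>.congr_deriv (by ring)⟩
    rcases hm with rfl | rfl
    · simp
    · exact Or.inr (mem_singleton_of_eq (by ring))
  · have hfun : (fun w => pPartial α δ ε r (update x j w) i) = fun _ => pPartial α δ ε r x i := by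
      funext w
      simp [pPartial, update_of_ne hij, update_of_ne (by omega : i - 1 ≠ j),
        update_of_ne (by omega : i + 1 ≠ j)]
    rw [hfun]
    exact ⟨0, by simp, hasDerivWithinAt_const _ _ _⟩

lemma deriv_eq_zero_or_eq_of_hasDerivWithinAt_Ici {f : ℝ → ℝ} {f' x : ℝ}
    (h : HasDerivWithinAt f f' (Ici x) x) : deriv f x = 0 ∨ deriv f x = f' := by
  by_cases hf : DifferentiableAt ℝ f x
  · exact Or.inr ((uniqueDiffWithinAt_Ici x).eq_deriv _ hf.hasDerivAt.hasDerivWithinAt h)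
  · exact Or.inl (deriv_zero_of_not_differentiableAt hf)

lemma antitone_of_hasDerivWithinAt_Ici_nonpos {f f' : ℝ → ℝ} (hf : Continuous f)
    (hf' : ∀ x, HasDerivWithinAt f (f' x) (Ici x) x) (hf'₀ : ∀ x, f' x ≤ 0) : Antitone f :=
  fun a _ hab => image_le_of_deriv_right_le_deriv_boundary (B := fun _ => f a) (B' := 0)
    hf.continuousOn (fun x _ => hf' x) le_rfl continuousOn_const
    (fun _ _ => hasDerivWithinAt_const _ _ _) (fun x _ => hf'₀ x) ⟨hab, le_rfl⟩

lemma antitone_mul_exp_neg {D D' P P' : ℝ → ℝ} (hD : Continuous D)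
    (hD' : ∀ v, HasDerivWithinAt D (D' v) (Ici v) v) (hP : ∀ v, HasDerivAt P (P' v) v)
    (hle : ∀ v, D' v ≤ D v * P' v) : Antitone fun v => D v * Real.exp (-P v) := by
  have hPc : Continuous P := continuous_iff_continuousAt.2 fun v => (hP v).continuousAt
  refine antitone_of_hasDerivWithinAt_Ici_nonpos (by fun_prop)
    (fun v => (hD' v).mul (hP v).fun_neg.exp.hasDerivWithinAt) fun v => ?_
  nlinarith [mul_nonpos_of_nonpos_of_nonneg (sub_nonpos.2 (hle v)) (Real.exp_pos (-P v)).le]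

lemma two_mul_le_one_sub_four_mul_sq {β : ℝ} (hβ : β ≤ 1 / 8) : 2 * β ≤ (1 - 4 * β) ^ 2 := by
  nlinarith

theorem stmt9_general (α δ ε : ℝ) (hα : 0 < α) (hα' : α ≤ 1/16) (hδ : 0 < δ) (hδ' : δ ≤ 1)
    (r : ℕ) :
    (2 * α * (1 + δ) - (1 - 4 * α * (1 + δ))^2 ≤ 0) ∧
    -- mixed second partials of p take values in {0, 2α(1+δ)} (wherever defined)
    (∀ x : ℕ → ℝ, ∀ i ∈ Finset.Icc 1 r, ∀ j ∈ Finset.Icc 1 r, i ≠ j → ∀ u : ℝ,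
      deriv (fun v =>
        deriv (fun s => pFun α δ ε r (Function.update (Function.update x j v) i s)) (x i)) u
        ∈ ({0, 2 * α * (1 + δ)} : Set ℝ)) ∧
    -- the first partials of q = 1 - e^{-p} are nonincreasing in every other coordinate
    (∀ x : ℕ → ℝ, ∀ i ∈ Finset.Icc 1 r, ∀ j ∈ Finset.Icc 1 r, i ≠ j →
      Antitone (fun v =>
        deriv (fun s =>
          1 - Real.exp (-(pFun α δ ε r (Function.update (Function.update x j v) i s))))
          (x i))) := by
  have h1δ : 0 ≤ 1 + δ := by linarith
  have hβ : α * (1 + δ) ≤ 1 / 8 := by nlinarith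
  have hscalar : 2 * α * (1 + δ) ≤ (1 - 4 * α * (1 + δ)) ^ 2 := by
    simpa only [← mul_assoc] using two_mul_le_one_sub_four_mul_sq hβ
  refine ⟨sub_nonpos.2 hscalar, fun x i hi j hj hij u => ?_, fun x i hi j hj hij => ?_⟩
  · obtain ⟨m, hm, hD⟩ :=
      exists_hasDerivWithinAt_Ici_pPartial_update α δ ε h1δ hij (Finset.mem_Icc.1 hj).2 x u
    simp only [fun v => (hasDerivAt_pFun_update α δ ε hi (update x j v) (x i)).deriv,
      update_update_apply_self hij]
    rcases deriv_eq_zero_or_eq_of_hasDerivWithinAt_Ici hD with h | h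
    · simp [h]
    · exact h ▸ hm
  · choose D' hD'mem hD' using
      exists_hasDerivWithinAt_Ici_pPartial_update α δ ε h1δ hij (Finset.mem_Icc.1 hj).2 x
    simp only [update_update_apply_self hij, fun v =>
      (hasDerivAt_one_sub_exp_neg_pFun_update α δ ε hi (update x j v) (x i)).deriv]
    have hlow := one_sub_le_pPartial hα.le h1δ ε r
    have hlow₀ : 0 ≤ 1 - 4 * α * (1 + δ) := by linarith
    refine antitone_mul_exp_neg (continuous_pPartial_update α δ ε r x i j) hD'
      (fun v => hasDerivAt_pFun_update α δ ε hj x v) fun v => ?_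
    calc D' v ≤ 2 * α * (1 + δ) := by rcases hD'mem v with h | h <;> rw [h]; positivity
      _ ≤ (1 - 4 * α * (1 + δ)) ^ 2 := hscalar
      _ ≤ _ := by
        rw [sq]; exact mul_le_mul (hlow _ i) (hlow _ j) hlow₀ (hlow₀.trans (hlow _ i))

theorem stmt9 (α δ ε : ℝ) (hα : 0 < α) (hα' : α ≤ 1/16) (hδ : 0 < δ) (hδ' : δ ≤ 1)
    (hε : 0 ≤ ε) (r : ℕ) (hr : 1 ≤ r) :
    (2 * α * (1 + δ) - (1 - 4 * α * (1 + δ))^2 ≤ 0) ∧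
    -- mixed second partials of p take values in {0, 2α(1+δ)} (wherever defined)
    (∀ x : ℕ → ℝ, ∀ i ∈ Finset.Icc 1 r, ∀ j ∈ Finset.Icc 1 r, i ≠ j → ∀ u : ℝ,
      deriv (fun v =>
        deriv (fun s => pFun α δ ε r (Function.update (Function.update x j v) i s)) (x i)) u
        ∈ ({0, 2 * α * (1 + δ)} : Set ℝ)) ∧
    -- the first partials of q = 1 - e^{-p} are nonincreasing in every other coordinate
    (∀ x : ℕ → ℝ, ∀ i ∈ Finset.Icc 1 r, ∀ j ∈ Finset.Icc 1 r, i ≠ j →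
      Antitone (fun v =>
        deriv (fun s =>
          1 - Real.exp (-(pFun α δ ε r (Function.update (Function.update x j v) i s))))
          (x i))) :=
  stmt9_general α δ ε hα hα' hδ hδ' r
end

section
/- Let r ≥ 1, δ > 0, ε ≥ 0 with δ/(3r) ≥ ε, δ/(3r) ≤ 2, and let h be the piecewise function h(x) = 0 for x ≤ ε, h(x) = α(x-ε)² for ε < x ≤ 2+ε, h(x) = 4α(x-1-ε) for x > 2+ε, with α > 0. Then for any nonnegative x_1, ..., x_r with Σ_{i=1}^{r-1} x_i + x_r ≥ 1/3 and x_0 = 0 (and 0 < δ ≤ 1), Σ_{i=0}^{r-1} h((1+δ)x_{i+1} - x_i) ≥ r·h(δ/(3r)) = rα(δ/(3r) - ε)². -/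
/-!
`hPiece α ε` is convex for `α ≥ 0`: it is `0`, then a parabola, then the tangent line of that
parabola at `2 + ε`. So it lies above its tangent line at any point `c ∈ [ε, 2 + ε]`, and the
tangent slope there is nonnegative. Summing the tangent bounds at `c = δ / (3r)` reduces the
claim to `∑ (arguments) ≥ r c = δ / 3`, and the arguments telescope to `δ (x₁ + ⋯ + x_r) + x_r`.
-/

lemma hPiece_of_le_of_le {α ε c : ℝ} (hεc : ε ≤ c) (hc : c ≤ 2 + ε) :
    hPiece α ε c = α * (c - ε) ^ 2 := by
  unfold hPiece
  split_ifs with h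
  · simp [le_antisymm h hεc]
  · rfl

lemma hPiece_add_slope_mul_sub_le {α ε c : ℝ} (hα : 0 ≤ α) (hεc : ε ≤ c) (hc : c ≤ 2 + ε) (t : ℝ) :
    hPiece α ε c + 2 * α * (c - ε) * (t - c) ≤ hPiece α ε t := by
  rw [hPiece_of_le_of_le hεc hc]
  unfold hPiece
  split_ifs with ht ht'
  · nlinarith [mul_nonneg (mul_nonneg hα (sub_nonneg.2 hεc)) (by linarith : 0 ≤ c + ε - 2 * t)]
  · nlinarith [mul_nonneg hα (sq_nonneg (t - c))]
  · nlinarith [mul_nonneg (mul_nonneg hα (by linarith : 0 ≤ 2 + ε - c))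
      (by linarith : 0 ≤ 2 * t - 2 - ε - c)]

lemma card_mul_le_sum_of_tangent {ι : Type*} (s : Finset ι) {f : ℝ → ℝ} {c m : ℝ} (hm : 0 ≤ m)
    (htan : ∀ t, f c + m * (t - c) ≤ f t) {a : ι → ℝ} (ha : s.card * c ≤ ∑ i ∈ s, a i) :
    s.card * f c ≤ ∑ i ∈ s, f (a i) := by
  calc (s.card : ℝ) * f c
      ≤ s.card * f c + m * (∑ i ∈ s, a i - s.card * c) := le_add_of_nonneg_right (by nlinarith)
    _ = ∑ i ∈ s, (f c + m * (a i - c)) := by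
      simp only [Finset.sum_add_distrib, ← Finset.mul_sum, Finset.sum_sub_distrib, Finset.sum_const,
        nsmul_eq_mul]
    _ ≤ ∑ i ∈ s, f (a i) := Finset.sum_le_sum fun i _ ↦ htan (a i)

lemma sum_range_one_add_mul_succ_sub (δ : ℝ) (x : ℕ → ℝ) (r : ℕ) :
    ∑ i ∈ Finset.range r, ((1 + δ) * x (i + 1) - x i)
      = δ * ∑ i ∈ Finset.range r, x (i + 1) + (x r - x 0) := by
  rw [← Finset.sum_range_sub, Finset.mul_sum, ← Finset.sum_add_distrib]
  exact Finset.sum_congr rfl fun i _ ↦ by ring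

lemma sum_range_succ_eq_sum_Icc_add {M : Type*} [AddCommMonoid M] (x : ℕ → M) {r : ℕ} (hr : 1 ≤ r) :
    ∑ i ∈ Finset.range r, x (i + 1) = ∑ i ∈ Finset.Icc 1 (r - 1), x i + x r := by
  obtain ⟨n, rfl⟩ := Nat.exists_eq_add_of_le' hr
  rw [Finset.sum_range_succ, Nat.add_sub_cancel, Finset.range_eq_Ico, Finset.sum_Ico_add',
    ← Finset.Ico_add_one_right_eq_Icc, zero_add, add_comm n]

theorem stmt10_general (α δ ε : ℝ) (hα : 0 < α) (hδ : 0 < δ) (hε : 0 ≤ ε)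
    (r : ℕ) (hr : 1 ≤ r)
    (h1 : ε ≤ δ / (3 * r)) (h2 : δ / (3 * r) ≤ 2)
    (x : ℕ → ℝ) (hx0 : x 0 = 0) (hnn : ∀ i, 0 ≤ x i)
    (hsum : (∑ i ∈ Finset.Icc 1 (r - 1), x i) + x r ≥ 1/3) :
    (∑ i ∈ Finset.range r, hPiece α ε ((1 + δ) * x (i + 1) - x i))
      ≥ r * α * (δ / (3 * r) - ε)^2 := by
  have hrc : r * (δ / (3 * r)) = δ / 3 := by
    have : (r : ℝ) ≠ 0 := by positivity
    field_simp
  set c := δ / (3 * r)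
  have hc : c ≤ 2 + ε := by linarith
  have hargs : r * c ≤ ∑ i ∈ Finset.range r, ((1 + δ) * x (i + 1) - x i) := by
    rw [sum_range_one_add_mul_succ_sub, sum_range_succ_eq_sum_Icc_add x hr, hx0, hrc]
    nlinarith [hnn r]
  have hslope : 0 ≤ 2 * α * (c - ε) := mul_nonneg (by positivity) (sub_nonneg.2 h1)
  have key := card_mul_le_sum_of_tangent (Finset.range r) hslope
    (hPiece_add_slope_mul_sub_le hα.le h1 hc) (a := fun i ↦ (1 + δ) * x (i + 1) - x i)
    (by simpa only [Finset.card_range] using hargs)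
  rw [Finset.card_range, hPiece_of_le_of_le h1 hc] at key
  linarith

theorem stmt10 (α δ ε : ℝ) (hα : 0 < α) (hδ : 0 < δ) (hδ' : δ ≤ 1) (hε : 0 ≤ ε)
    (r : ℕ) (hr : 1 ≤ r)
    (h1 : ε ≤ δ / (3 * r)) (h2 : δ / (3 * r) ≤ 2)
    (x : ℕ → ℝ) (hx0 : x 0 = 0) (hnn : ∀ i, 0 ≤ x i)
    (hsum : (∑ i ∈ Finset.Icc 1 (r - 1), x i) + x r ≥ 1/3) :
    (∑ i ∈ Finset.range r, hPiece α ε ((1 + δ) * x (i + 1) - x i))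
      ≥ r * α * (δ / (3 * r) - ε)^2 :=
  stmt10_general α δ ε hα hδ hε r hr h1 h2 x hx0 hnn hsum
end
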